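/- For every d ≥ 1, every multi-index α ∈ ℕ^d and all X ≥ 0, one has V_α(X) ≥ 2^d e^{−X/2}; moreover V_α(0) = 2^d. -/

import Mathlib

open MeasureTheory

noncomputable section

/-- The `n`-th Laguerre polynomial `L_n(x) = Σ_{k=0}^n (n choose k) (−x)^k / k!`. -/
def laguerreFun (n : ℕ) (x : ℝ) : ℝ :=
  ∑ k ∈ Finset.range (n + 1), (n.choose k : ℝ) * (-x) ^ k / (k.factorial : ℝ)

/-- `T_n(X) = Σ_{k=0}^{n−1} (−1)^k L_k(X) + ((−1)^n/2) L_n(X)`. -/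
def Tfun (n : ℕ) (X : ℝ) : ℝ :=
  (∑ k ∈ Finset.range n, (-1 : ℝ) ^ k * laguerreFun k X) +
    (-1 : ℝ) ^ n / 2 * laguerreFun n X

/-- `V_α(X) = 4 e^{−X/2} Σ_{k=0}^{d−1} C(d−1,k) T_{|α|+k}(X)`. -/
def Vfun (d : ℕ) (α : Fin d → ℕ) (X : ℝ) : ℝ :=
  4 * Real.exp (-X / 2) *
    ∑ k ∈ Finset.range d, ((d - 1).choose k : ℝ) * Tfun ((∑ j, α j) + k) X

/-!
Write `S_n(x) = Σ_{k<n} (-1)^k L_k(x)`. Then `T_n = (S_n + S_{n+1})/2`, so `T_n(0) = 1/2` and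
`T_n' = S_n/2`; hence `T_n ≥ 1/2` on `[0, ∞)` as soon as `S_n ≥ 0` there, and summing
`T_{|α|+k} ≥ 1/2` against the binomial weights gives the bound (with equality at `X = 0`).

Positivity of `S_n` comes from the sum-of-squares identity
`S_{N+1}(y^2) = Σ_{i+m=N} w_i He_m(y)^2 / m!` with `w_i = He_i(0)^2 / i!`,
both sides having generating function `e^{y^2 t/(1+t)} / (1 - t^2)` (Mehler's formula).
It is proved by induction on `N`, together with its companion for `Σ w_i He_{m+1} He_m / m!`,
by comparing derivatives in `y` and values at `y = 0`; the latter amount to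
`Σ_{i+m=N} w_i w_m = [N even]`.
-/

open Finset Polynomial

lemma laguerreFun_zero_left (x : ℝ) : laguerreFun 0 x = 1 := by
  simp [laguerreFun]

lemma laguerreFun_zero_right (n : ℕ) : laguerreFun n 0 = 1 := by
  simp [laguerreFun, sum_range_succ']

lemma laguerreFun_succ_sub (n : ℕ) (x : ℝ) :
    laguerreFun (n + 1) x - laguerreFun n x =
      ∑ k ∈ range (n + 1), (n.choose k : ℝ) * (-x) ^ (k + 1) / (k + 1).factorial := by
  set g : ℕ → ℝ := fun k => (-x) ^ k / k.factorial
  have hL (m : ℕ) : laguerreFun m x = ∑ k ∈ range (m + 1), (m.choose k : ℝ) * g k := by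
    simp only [laguerreFun, g, mul_div_assoc]
  have hn : laguerreFun n x = ∑ k ∈ range (n + 1), (n.choose (k + 1) : ℝ) * g (k + 1) + 1 := by
    rw [hL, sum_range_succ', sum_range_succ _ n]
    simp [g]
  rw [hL, sum_range_succ', hn]
  simp only [Nat.choose_succ_succ', Nat.cast_add, add_mul, sum_add_distrib, g, mul_div_assoc]
  simp

lemma hasDerivAt_laguerreFun_succ_sub (n : ℕ) (x : ℝ) :
    HasDerivAt (fun x => laguerreFun (n + 1) x - laguerreFun n x) (-laguerreFun n x) x := by
  simp only [laguerreFun_succ_sub]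
  have hterm (k : ℕ) :
      HasDerivAt (fun x : ℝ => (n.choose k : ℝ) * (-x) ^ (k + 1) / (k + 1).factorial)
        (-((n.choose k : ℝ) * (-x) ^ k / k.factorial)) x := by
    refine ((((hasDerivAt_neg x).pow (k + 1)).const_mul (n.choose k : ℝ)).div_const
      ((k + 1).factorial : ℝ)).congr_deriv ?_
    rw [Nat.factorial_succ]
    push_cast
    field_simp
  refine (HasDerivAt.fun_sum (u := range (n + 1)) fun k _ => hterm k).congr_deriv ?_
  simp [laguerreFun, sum_neg_distrib]

lemma hasDerivAt_laguerreFun (n : ℕ) (x : ℝ) :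
    HasDerivAt (laguerreFun n) (-∑ i ∈ range n, laguerreFun i x) x := by
  induction n with
  | zero => simpa [funext laguerreFun_zero_left] using hasDerivAt_const x (1 : ℝ)
  | succ n ih =>
    have h := ih.add (hasDerivAt_laguerreFun_succ_sub n x)
    simp only [Pi.add_def, add_sub_cancel] at h
    exact h.congr_deriv (by rw [sum_range_succ]; ring)

def altLaguerreSum (n : ℕ) (x : ℝ) : ℝ := ∑ k ∈ range n, (-1) ^ k * laguerreFun k x

def altLaguerreSumDeriv (n : ℕ) (x : ℝ) : ℝ :=
  (altLaguerreSum n x + (-1) ^ n * ∑ i ∈ range n, laguerreFun i x) / 2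

lemma altLaguerreSum_succ (n : ℕ) (x : ℝ) :
    altLaguerreSum (n + 1) x = altLaguerreSum n x + (-1) ^ n * laguerreFun n x :=
  sum_range_succ _ _

lemma altLaguerreSum_zero_right (n : ℕ) : altLaguerreSum n 0 = if Even n then 0 else 1 := by
  simp [altLaguerreSum, laguerreFun_zero_right, neg_one_geom_sum]

lemma hasDerivAt_altLaguerreSum (n : ℕ) (x : ℝ) :
    HasDerivAt (altLaguerreSum n) (altLaguerreSumDeriv n x) x := by
  induction n with
  | zero =>
    have h0 : altLaguerreSum 0 = fun _ => 0 := by ext; simp [altLaguerreSum]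
    rw [h0]
    simpa [altLaguerreSumDeriv, altLaguerreSum] using hasDerivAt_const x (0 : ℝ)
  | succ n ih =>
    have h := ih.add ((hasDerivAt_laguerreFun n x).const_mul ((-1 : ℝ) ^ n))
    rw [funext (altLaguerreSum_succ n)]
    refine h.congr_deriv ?_
    simp only [altLaguerreSumDeriv, altLaguerreSum_succ, sum_range_succ, pow_succ]
    ring

lemma altLaguerreSumDeriv_succ_add (n : ℕ) (x : ℝ) :
    altLaguerreSumDeriv (n + 1) x + altLaguerreSumDeriv n x = altLaguerreSum n x := by
  simp only [altLaguerreSumDeriv, altLaguerreSum_succ, sum_range_succ, pow_succ]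
  ring

lemma Tfun_eq_altLaguerreSum_add_div_two (n : ℕ) (x : ℝ) :
    Tfun n x = (altLaguerreSum n x + altLaguerreSum (n + 1) x) / 2 := by
  rw [altLaguerreSum_succ, Tfun, altLaguerreSum]
  ring

lemma Tfun_zero_right (n : ℕ) : Tfun n 0 = 1 / 2 := by
  simp only [Tfun_eq_altLaguerreSum_add_div_two, altLaguerreSum_zero_right, Nat.even_add_one]
  split_ifs <;> norm_num

lemma hasDerivAt_Tfun (n : ℕ) (x : ℝ) : HasDerivAt (Tfun n) (altLaguerreSum n x / 2) x := by
  rw [funext (Tfun_eq_altLaguerreSum_add_div_two n)]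
  refine (((hasDerivAt_altLaguerreSum n x).add
    (hasDerivAt_altLaguerreSum (n + 1) x)).div_const 2).congr_deriv ?_
  rw [add_comm, altLaguerreSumDeriv_succ_add]

lemma derivative_hermite_succ (n : ℕ) :
    derivative (hermite (n + 1)) = (n + 1 : ℤ[X]) * hermite n := by
  induction n with
  | zero => simp
  | succ n ih =>
    calc derivative (hermite (n + 2))
        = hermite (n + 1) + (n + 1 : ℤ[X]) * (X * hermite n - derivative (hermite n)) := by
          rw [hermite_succ (n + 1), derivative_sub, derivative_mul, ih, derivative_mul]
          simp only [derivative_X, derivative_add, derivative_natCast, derivative_one]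
          ring
      _ = (↑(n + 1) + 1 : ℤ[X]) * hermite (n + 1) := by
          rw [← hermite_succ]
          push_cast
          ring

def hermiteFun (n : ℕ) (y : ℝ) : ℝ := aeval y (hermite n)

@[simp] lemma hermiteFun_zero (y : ℝ) : hermiteFun 0 y = 1 := by simp [hermiteFun]

@[simp] lemma hermiteFun_one (y : ℝ) : hermiteFun 1 y = y := by simp [hermiteFun]

lemma hermiteFun_succ_succ (n : ℕ) (y : ℝ) :
    hermiteFun (n + 2) y = y * hermiteFun (n + 1) y - (n + 1) * hermiteFun n y := by
  rw [hermiteFun, hermite_succ (n + 1), derivative_hermite_succ]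
  simp [hermiteFun]

lemma hasDerivAt_hermiteFun_succ (n : ℕ) (y : ℝ) :
    HasDerivAt (hermiteFun (n + 1)) ((n + 1) * hermiteFun n y) y := by
  have h := (hermite (n + 1)).hasDerivAt_aeval y
  rw [derivative_hermite_succ] at h
  exact h.congr_deriv (by simp [hermiteFun])

lemma hermiteFun_succ_succ_zero (n : ℕ) : hermiteFun (n + 2) 0 = -(n + 1) * hermiteFun n 0 := by
  rw [hermiteFun_succ_succ]
  ring

lemma hermiteFun_cross (m : ℕ) (y : ℝ) :
    hermiteFun (m + 2) y * hermiteFun (m + 1) y / (m + 1).factorial +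
        hermiteFun (m + 1) y * hermiteFun m y / m.factorial =
      y * (hermiteFun (m + 1) y ^ 2 / (m + 1).factorial) := by
  rw [hermiteFun_succ_succ, Nat.factorial_succ]
  push_cast
  field_simp
  ring

lemma sum_antidiagonal_add_two_of_recurrence {w : ℕ → ℝ} (hw₁ : w 1 = 0)
    (hrec : ∀ m : ℕ, (m + 2) * w (m + 2) = (m + 1) * w m) (N : ℕ) :
    ∑ p ∈ antidiagonal (N + 2), w p.1 * w p.2 = ∑ p ∈ antidiagonal N, w p.1 * w p.2 := by
  -- Symmetrising `Σ p.1 w_{p.1} w_{p.2}` over `antidiagonal (N + 2)` gives `(N + 2)/2` times the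
  -- convolution; the recurrence rewrites it as `Σ (p.1 + 1) w_{p.1} w_{p.2}` over `antidiagonal N`,
  -- which symmetrises to `(N + 2)/2` times the convolution at `N`.
  have hsymm (M : ℕ) (b : ℝ) :
      2 * ∑ p ∈ antidiagonal M, (p.1 + b) * (w p.1 * w p.2) =
        (M + 2 * b) * ∑ p ∈ antidiagonal M, w p.1 * w p.2 := by
    have hswap := Nat.sum_antidiagonal_swap (n := M) (f := fun p => (p.1 + b) * (w p.1 * w p.2))
    rw [two_mul]
    nth_rw 1 [← hswap]
    rw [← sum_add_distrib, mul_sum]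
    refine sum_congr rfl fun p hp => ?_
    have hM : (p.1 : ℝ) + p.2 = M := by exact_mod_cast mem_antidiagonal.mp hp
    simp only [Prod.fst_swap, Prod.snd_swap]
    linear_combination (w p.1 * w p.2) * hM
  have hshift : ∑ p ∈ antidiagonal (N + 2), (p.1 : ℝ) * (w p.1 * w p.2) =
      ∑ p ∈ antidiagonal N, (p.1 + 1 : ℝ) * (w p.1 * w p.2) := by
    rw [Nat.sum_antidiagonal_succ, Nat.sum_antidiagonal_succ]
    simp only [hw₁, Nat.cast_add, Nat.cast_one, CharP.cast_eq_zero, zero_mul, mul_zero,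
      zero_add]
    refine sum_congr rfl fun p _ => ?_
    linear_combination w p.2 * hrec p.1
  have hN : (N + 2 : ℝ) ≠ 0 := by positivity
  have h := hsymm (N + 2) 0
  simp only [add_zero, mul_zero] at h
  rw [hshift, hsymm N 1] at h
  push_cast at h
  exact mul_left_cancel₀ hN (by linear_combination -h)

-- The Taylor coefficients of `(1 - t^2)^{-1/2}`: `0` for odd `m`, `C(m, m/2) / 2^m` for even `m`.
def hermiteWeight (m : ℕ) : ℝ := hermiteFun m 0 ^ 2 / m.factorial

lemma hermiteWeight_nonneg (m : ℕ) : 0 ≤ hermiteWeight m := by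
  unfold hermiteWeight
  positivity

lemma hermiteWeight_succ_succ (m : ℕ) :
    (m + 2) * hermiteWeight (m + 2) = (m + 1) * hermiteWeight m := by
  simp only [hermiteWeight, hermiteFun_succ_succ_zero, Nat.factorial_succ]
  push_cast
  field_simp
  ring

lemma sum_antidiagonal_hermiteWeight (N : ℕ) :
    ∑ p ∈ antidiagonal N, hermiteWeight p.1 * hermiteWeight p.2 = if Even N then 1 else 0 := by
  induction N using Nat.twoStepInduction with
  | zero => simp [hermiteWeight]
  | one => simp [hermiteWeight, Nat.sum_antidiagonal_succ]
  | more N ih _ =>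
    rw [sum_antidiagonal_add_two_of_recurrence (by simp [hermiteWeight])
      (by exact_mod_cast hermiteWeight_succ_succ) N, ih]
    simp [Nat.even_add]

def hermiteSqSum (N : ℕ) (y : ℝ) : ℝ :=
  ∑ p ∈ antidiagonal N, hermiteWeight p.1 * (hermiteFun p.2 y ^ 2 / p.2.factorial)

def hermiteMulSum (N : ℕ) (y : ℝ) : ℝ :=
  ∑ p ∈ antidiagonal N,
    hermiteWeight p.1 * (hermiteFun (p.2 + 1) y * hermiteFun p.2 y / p.2.factorial)

lemma hermiteSqSum_nonneg (N : ℕ) (y : ℝ) : 0 ≤ hermiteSqSum N y :=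
  sum_nonneg fun p _ => mul_nonneg (hermiteWeight_nonneg p.1) (by positivity)

lemma hermiteSqSum_zero_right (N : ℕ) : hermiteSqSum N 0 = if Even N then 1 else 0 :=
  sum_antidiagonal_hermiteWeight N

lemma hermiteSqSum_succ (N : ℕ) (y : ℝ) :
    hermiteSqSum (N + 1) y = hermiteWeight (N + 1) +
      ∑ p ∈ antidiagonal N,
        hermiteWeight p.1 * (hermiteFun (p.2 + 1) y ^ 2 / (p.2 + 1).factorial) := by
  simp [hermiteSqSum, Nat.sum_antidiagonal_succ']

lemma hermiteMulSum_succ_add (N : ℕ) (y : ℝ) :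
    hermiteMulSum (N + 1) y + hermiteMulSum N y = y * hermiteSqSum (N + 1) y := by
  rw [hermiteMulSum, Nat.sum_antidiagonal_succ', hermiteSqSum_succ, add_assoc, hermiteMulSum,
    ← sum_add_distrib, mul_add, mul_sum]
  simp only [zero_add, hermiteFun_one, hermiteFun_zero, Nat.factorial_zero, Nat.cast_one, div_one,
    mul_one]
  congr 1
  · ring
  · refine sum_congr rfl fun p _ => ?_
    linear_combination hermiteWeight p.1 * hermiteFun_cross p.2 y

lemma hasDerivAt_hermiteSqSum_succ (N : ℕ) (y : ℝ) :
    HasDerivAt (hermiteSqSum (N + 1)) (2 * hermiteMulSum N y) y := by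
  rw [funext (hermiteSqSum_succ N)]
  have hterm (m : ℕ) : HasDerivAt (fun y => hermiteFun (m + 1) y ^ 2 / (m + 1).factorial)
      (2 * (hermiteFun (m + 1) y * hermiteFun m y / m.factorial)) y := by
    refine (((hasDerivAt_hermiteFun_succ m y).pow 2).div_const _).congr_deriv ?_
    rw [Nat.factorial_succ]
    push_cast
    field_simp
  refine ((hasDerivAt_const y _).add (HasDerivAt.fun_sum fun p _ =>
    (hterm p.2).const_mul (hermiteWeight p.1))).congr_deriv ?_
  rw [hermiteMulSum, mul_sum, zero_add]
  exact sum_congr rfl fun p _ => by ring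

theorem hermiteSqSum_eq_altLaguerreSum (N : ℕ) :
    (∀ y, hermiteSqSum N y = altLaguerreSum (N + 1) (y ^ 2)) ∧
      ∀ y, hermiteMulSum N y = y * altLaguerreSumDeriv (N + 2) (y ^ 2) := by
  induction N with
  | zero =>
    refine ⟨fun y => ?_, fun y => ?_⟩
    · simp [hermiteSqSum, hermiteWeight, altLaguerreSum, laguerreFun_zero_left]
    · simp [hermiteMulSum, hermiteWeight, altLaguerreSumDeriv, altLaguerreSum, sum_range_succ,
        laguerreFun_zero_left]
      ring
  | succ N ih =>
    have hsq (y : ℝ) : HasDerivAt (fun y => altLaguerreSum (N + 2) (y ^ 2))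
        (2 * hermiteMulSum N y) y := by
      refine ((hasDerivAt_altLaguerreSum (N + 2) (y ^ 2)).comp y
        (hasDerivAt_pow 2 y)).congr_deriv ?_
      rw [ih.2]
      push_cast
      ring
    have hR : ∀ y, hermiteSqSum (N + 1) y = altLaguerreSum (N + 2) (y ^ 2) := by
      refine congrFun (eq_of_fderiv_eq (𝕜 := ℝ)
        (fun y => (hasDerivAt_hermiteSqSum_succ N y).differentiableAt)
        (fun y => (hsq y).differentiableAt) (fun y => ?_) 0 ?_)
      · rw [(hasDerivAt_hermiteSqSum_succ N y).hasFDerivAt.fderiv, (hsq y).hasFDerivAt.fderiv]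
      · rw [hermiteSqSum_zero_right, zero_pow two_ne_zero, altLaguerreSum_zero_right]
        simp only [Nat.even_add_one, not_not]
        split_ifs <;> rfl
    refine ⟨hR, fun y => ?_⟩
    have h := hermiteMulSum_succ_add N y
    rw [hR, ih.2, ← altLaguerreSumDeriv_succ_add] at h
    linear_combination h

theorem altLaguerreSum_nonneg (n : ℕ) {x : ℝ} (hx : 0 ≤ x) : 0 ≤ altLaguerreSum n x := by
  cases n with
  | zero => simp [altLaguerreSum]
  | succ N =>
    rw [← Real.sq_sqrt hx, ← (hermiteSqSum_eq_altLaguerreSum N).1]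
    exact hermiteSqSum_nonneg N _

lemma half_le_Tfun (n : ℕ) {X : ℝ} (hX : 0 ≤ X) : 1 / 2 ≤ Tfun n X := by
  have hmono : MonotoneOn (Tfun n) (Set.Ici 0) :=
    monotoneOn_of_hasDerivWithinAt_nonneg (convex_Ici 0)
      (fun x _ => (hasDerivAt_Tfun n x).continuousAt.continuousWithinAt)
      (fun x _ => (hasDerivAt_Tfun n x).hasDerivWithinAt)
      (fun x hx => by
        rw [interior_Ici] at hx
        exact div_nonneg (altLaguerreSum_nonneg n (le_of_lt hx)) zero_le_two)
  simpa [Tfun_zero_right] using hmono Set.self_mem_Ici hX hX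

theorem V_lower_bound (d : ℕ) (hd : 1 ≤ d) (α : Fin d → ℕ) :
    (∀ X : ℝ, 0 ≤ X → (2 : ℝ) ^ d * Real.exp (-X / 2) ≤ Vfun d α X) ∧
      Vfun d α 0 = (2 : ℝ) ^ d := by
  have hchoose : 4 * ∑ k ∈ range d, ((d - 1).choose k : ℝ) * (1 / 2) = 2 ^ d := by
    obtain ⟨e, rfl⟩ := Nat.exists_eq_add_of_le' hd
    rw [← sum_mul, Nat.add_sub_cancel, ← Nat.cast_sum, Nat.sum_range_choose, pow_succ]
    push_cast
    ring
  constructor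
  · intro X hX
    calc (2 : ℝ) ^ d * Real.exp (-X / 2)
        = 4 * Real.exp (-X / 2) * ∑ k ∈ range d, ((d - 1).choose k : ℝ) * (1 / 2) := by
          rw [← hchoose]
          ring
      _ ≤ Vfun d α X := by
          unfold Vfun
          gcongr with k
          exact half_le_Tfun _ hX
  · simp only [Vfun, Tfun_zero_right, neg_zero, zero_div, Real.exp_zero, mul_one, hchoose]
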